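/- The Lagrangian l(i, v) = −β·exp(i) − (v + γ)·(1 − ln((v + γ)/β)), defined for v > −γ, has Euler–Lagrange equation equivalent to i'' = −β·exp(i)·(i' + γ): for twice differentiable i with i'(t) > −γ, d/dt(∂l/∂v(i(t), i'(t))) = ∂l/∂i(i(t), i'(t)) iff i''(t) = −β·exp(i(t))·(i'(t) + γ). -/
import Mathlib


theorem euler_lagrange_log_sir
    (β γ : ℝ) (hβ : 0 < β) (hγ : 0 < γ)
    (i : ℝ → ℝ) (hi : Differentiable ℝ i) (hi' : Differentiable ℝ (deriv i))
    (hv : ∀ t, -γ < deriv i t) :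
    ∀ t, deriv (fun u => Real.log ((deriv i u + γ) / β)) t
            = -(β * Real.exp (i t)) ↔
         deriv (deriv i) t = -(β * Real.exp (i t)) * (deriv i t + γ) := by
  intro t
  have hpos : ∀ u, 0 < deriv i u + γ := fun u => by linarith [hv u]
  have h1 : HasDerivAt (fun u => (deriv i u + γ) / β)
      (deriv (deriv i) t / β) t :=
    ((hi'.differentiableAt.hasDerivAt).add_const γ).div_const β
  have h2 : HasDerivAt (fun u => Real.log ((deriv i u + γ) / β))
      ((deriv (deriv i) t / β) / ((deriv i t + γ) / β)) t :=
    h1.log (ne_of_gt (div_pos (hpos t) hβ))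
  rw [h2.deriv]
  have hβ' : β ≠ 0 := ne_of_gt hβ
  have ht : deriv i t + γ ≠ 0 := ne_of_gt (hpos t)
  have key : deriv (deriv i) t / β / ((deriv i t + γ) / β)
      = deriv (deriv i) t / (deriv i t + γ) := by
    field_simp
  rw [key, div_eq_iff ht]
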